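/- Suppose H, K, M are Hilbert spaces, T₀ on H, R₀ on K, V on M, Y₀: H → K, K: K → M, Z: H → M are bounded operators with Y₀T₀ = R₀Y₀. Put A = VZ - ZT₀ + KY₀, and define T = [[V, A],[0, T₀]] on M ⊕ H and R = [[V, K],[0, R₀]] on M ⊕ K. If R and T₀ are power bounded, then T is power bounded. -/
import Mathlib


/-- An operator `T` is power bounded if `sup_{n ≥ 1} ‖Tⁿ‖ < ∞`. -/
def PowerBounded {H : Type*} [NormedAddCommGroup H] [NormedSpace ℂ H]
    (T : H →L[ℂ] H) : Prop :=
  ∃ C : ℝ, ∀ n : ℕ, 1 ≤ n → ‖T ^ n‖ ≤ C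

/-- With `A = VZ - ZT₀ + KY₀` and the block operators `T = [[V,A],[0,T₀]]`,
`R = [[V,K],[0,R₀]]`: if `R` and `T₀` are power bounded then so is `T`. -/
theorem block_powerBounded
    {𝓗 𝓚 𝓜 : Type*}
    [NormedAddCommGroup 𝓗] [InnerProductSpace ℂ 𝓗] [CompleteSpace 𝓗]
    [NormedAddCommGroup 𝓚] [InnerProductSpace ℂ 𝓚] [CompleteSpace 𝓚]
    [NormedAddCommGroup 𝓜] [InnerProductSpace ℂ 𝓜] [CompleteSpace 𝓜]
    (T₀ : 𝓗 →L[ℂ] 𝓗) (R₀ : 𝓚 →L[ℂ] 𝓚) (V : 𝓜 →L[ℂ] 𝓜)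
    (Y₀ : 𝓗 →L[ℂ] 𝓚) (K : 𝓚 →L[ℂ] 𝓜) (Z : 𝓗 →L[ℂ] 𝓜)
    (hint : Y₀.comp T₀ = R₀.comp Y₀)
    (A : 𝓗 →L[ℂ] 𝓜) (hA : A = V.comp Z - Z.comp T₀ + K.comp Y₀)
    (T : 𝓜 × 𝓗 →L[ℂ] 𝓜 × 𝓗) (hT : ∀ v : 𝓜 × 𝓗, T v = (V v.1 + A v.2, T₀ v.2))
    (R : 𝓜 × 𝓚 →L[ℂ] 𝓜 × 𝓚) (hR : ∀ v : 𝓜 × 𝓚, R v = (V v.1 + K v.2, R₀ v.2)) :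
    PowerBounded R → PowerBounded T₀ → PowerBounded T := by
  rintro ⟨CR, hCR⟩ ⟨C0, hC0⟩
  have hC0nonneg : 0 ≤ C0 := le_trans (norm_nonneg _) (hC0 1 le_rfl)
  have hCRnonneg : 0 ≤ CR := le_trans (norm_nonneg _) (hCR 1 le_rfl)
  set W : 𝓜 × 𝓗 →L[ℂ] 𝓜 × 𝓚 :=
    ((ContinuousLinearMap.fst ℂ 𝓜 𝓗) + Z.comp (ContinuousLinearMap.snd ℂ 𝓜 𝓗)).prod
      (Y₀.comp (ContinuousLinearMap.snd ℂ 𝓜 𝓗)) with hWdef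
  have hWapp : ∀ v : 𝓜 × 𝓗, W v = (v.1 + Z v.2, Y₀ v.2) := fun v => rfl
  have hY : ∀ y : 𝓗, Y₀ (T₀ y) = R₀ (Y₀ y) := by
    intro y
    have := ContinuousLinearMap.ext_iff.mp hint y
    simpa using this
  have hcomm : ∀ v : 𝓜 × 𝓗, W (T v) = R (W v) := by
    intro v
    rw [hT, hWapp, hWapp, hR]
    refine Prod.ext ?_ ?_
    · simp only [hA, ContinuousLinearMap.add_apply, ContinuousLinearMap.sub_apply,
        ContinuousLinearMap.comp_apply, map_add]
      abel
    · simpa using hY v.2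
  have hsnd : ∀ n : ℕ, ∀ v : 𝓜 × 𝓗, ((T ^ n) v).2 = (T₀ ^ n) v.2 := by
    intro n
    induction n with
    | zero => intro v; simp
    | succ n ih =>
      intro v
      rw [pow_succ, pow_succ]
      simp only [ContinuousLinearMap.mul_apply]
      rw [hT]
      simpa using ih (V v.1 + A v.2, T₀ v.2)
  have hcommn : ∀ n : ℕ, ∀ v : 𝓜 × 𝓗, W ((T ^ n) v) = (R ^ n) (W v) := by
    intro n
    induction n with
    | zero => intro v; simp
    | succ n ih =>
      intro v
      rw [pow_succ', pow_succ']
      simp only [ContinuousLinearMap.mul_apply]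
      rw [hcomm, ih]
  have hfst : ∀ n : ℕ, ∀ v : 𝓜 × 𝓗,
      ((T ^ n) v).1 = ((R ^ n) (W v)).1 - Z ((T₀ ^ n) v.2) := by
    intro n v
    have h := congrArg Prod.fst (hcommn n v)
    rw [hWapp] at h
    simp only at h
    rw [hsnd n v] at h
    exact eq_sub_of_add_eq h
  refine ⟨max (CR * ‖W‖ + ‖Z‖ * C0) C0, fun n hn => ?_⟩
  refine ContinuousLinearMap.opNorm_le_bound _ (le_trans hC0nonneg (le_max_right _ _)) ?_
  intro v
  have hv1 : ‖v.1‖ ≤ ‖v‖ := norm_fst_le v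
  have hv2 : ‖v.2‖ ≤ ‖v‖ := norm_snd_le v
  have hb1 : ‖((T ^ n) v).1‖ ≤ (CR * ‖W‖ + ‖Z‖ * C0) * ‖v‖ := by
    rw [hfst n v]
    calc ‖((R ^ n) (W v)).1 - Z ((T₀ ^ n) v.2)‖
        ≤ ‖((R ^ n) (W v)).1‖ + ‖Z ((T₀ ^ n) v.2)‖ := norm_sub_le _ _
      _ ≤ ‖(R ^ n) (W v)‖ + ‖Z‖ * ‖(T₀ ^ n) v.2‖ :=
          add_le_add (norm_fst_le _) (Z.le_opNorm _)
      _ ≤ ‖R ^ n‖ * ‖W v‖ + ‖Z‖ * (‖T₀ ^ n‖ * ‖v.2‖) :=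
          add_le_add (ContinuousLinearMap.le_opNorm _ _)
            (mul_le_mul_of_nonneg_left (ContinuousLinearMap.le_opNorm _ _) (norm_nonneg _))
      _ ≤ CR * (‖W‖ * ‖v‖) + ‖Z‖ * (C0 * ‖v‖) := by
          gcongr
          · exact hCR n hn
          · exact W.le_opNorm v
          · exact hC0 n hn
      _ = (CR * ‖W‖ + ‖Z‖ * C0) * ‖v‖ := by ring
  have hb2 : ‖((T ^ n) v).2‖ ≤ C0 * ‖v‖ := by
    rw [hsnd n v]
    calc ‖(T₀ ^ n) v.2‖ ≤ ‖T₀ ^ n‖ * ‖v.2‖ := ContinuousLinearMap.le_opNorm _ _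
      _ ≤ C0 * ‖v‖ := by gcongr; exact hC0 n hn
  have : ‖(T ^ n) v‖ = max ‖((T ^ n) v).1‖ ‖((T ^ n) v).2‖ := rfl
  rw [this]
  refine max_le (le_trans hb1 ?_) (le_trans hb2 ?_)
  · exact mul_le_mul_of_nonneg_right (le_max_left _ _) (norm_nonneg _)
  · exact mul_le_mul_of_nonneg_right (le_max_right _ _) (norm_nonneg _)
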